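/- On the nilpotent Lie algebra 𝔫, let ∇ be the torsion connection associated with the 3-form T = −2e₁₄₅ + e₁₃₆ + e₂₃₅ − e₂₄₆. Then: (1) ∇_X(JY) = J(∇_X Y) for all X,Y; (2) ∇Ψ⁺ = 0 and ∇Ψ⁻ = 0; (3) the torsion of ∇ satisfies g(∇_X Y − ∇_Y X − [X,Y], Z) = T(X,Y,Z) for all X,Y,Z; (4) the Lee form vanishes: θ(X) = −½ Σᵢ T(JX, eᵢ, Jeᵢ) = 0 for all X (balanced); (5) the Chevalley–Eilenberg differential of T is dT = −2(e₁₂₃₄ + e₁₂₅₆ + e₃₄₅₆). -/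

import Mathlib

open scoped BigOperators

noncomputable section

/-- The standard inner product on ℝ⁶. -/
def gIP (X Y : Fin 6 → ℝ) : ℝ := ∑ i, X i * Y i

/-- The standard orthonormal basis e₁,…,e₆ (0-indexed). -/
def e (i : Fin 6) : Fin 6 → ℝ := fun j => if j = i then 1 else 0

/-- The 2-form e_{ij} (0-indexed). -/
def two (i j : Fin 6) (X Y : Fin 6 → ℝ) : ℝ := X i * Y j - X j * Y i

/-- The 3-form e_{ijk} (0-indexed). -/
def three (i j k : Fin 6) (X Y Z : Fin 6 → ℝ) : ℝ :=
  X i * (Y j * Z k - Y k * Z j) - X j * (Y i * Z k - Y k * Z i) + X k * (Y i * Z j - Y j * Z i)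

/-- The 4-form e_{ijkl} (0-indexed). -/
def four (i j k l : Fin 6) (X Y Z W : Fin 6 → ℝ) : ℝ :=
  X i * three j k l Y Z W - X j * three i k l Y Z W
    + X k * three i j l Y Z W - X l * three i j k Y Z W

/-- F = −e₁₂ − e₃₄ − e₅₆. -/
def Fform (X Y : Fin 6 → ℝ) : ℝ := -two 0 1 X Y - two 2 3 X Y - two 4 5 X Y

/-- Ψ⁺ = −e₁₃₅ + e₂₃₆ + e₁₄₆ + e₂₄₅. -/
def Psip (X Y Z : Fin 6 → ℝ) : ℝ :=
  -three 0 2 4 X Y Z + three 1 2 5 X Y Z + three 0 3 5 X Y Z + three 1 3 4 X Y Z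

/-- Ψ⁻ = −e₁₃₆ − e₁₄₅ − e₂₃₅ + e₂₄₆. -/
def Psim (X Y Z : Fin 6 → ℝ) : ℝ :=
  -three 0 2 5 X Y Z - three 0 3 4 X Y Z - three 1 2 4 X Y Z + three 1 3 5 X Y Z

/-- Φ(X,Y,Z,V) = F(X,Y)F(Z,V) + F(Y,Z)F(X,V) + F(Z,X)F(Y,V). -/
def Phi (X Y Z V : Fin 6 → ℝ) : ℝ :=
  Fform X Y * Fform Z V + Fform Y Z * Fform X V + Fform Z X * Fform Y V

/-- The orthogonal complex structure: Je₁=e₂, Je₂=−e₁, Je₃=e₄, Je₄=−e₃, Je₅=e₆, Je₆=−e₅. -/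
def Jc (X : Fin 6 → ℝ) : Fin 6 → ℝ := ![-X 1, X 0, -X 3, X 2, -X 5, X 4]

/-- Θ⁺ = e₁₃₅ − e₁₄₆ − e₂₃₆ − e₂₄₅. -/
def Thp (X Y Z : Fin 6 → ℝ) : ℝ :=
  three 0 2 4 X Y Z - three 0 3 5 X Y Z - three 1 2 5 X Y Z - three 1 3 4 X Y Z

/-- Θ⁻ = e₁₃₆ + e₁₄₅ + e₂₃₅ − e₂₄₆. -/
def Thm (X Y Z : Fin 6 → ℝ) : ℝ :=
  three 0 2 5 X Y Z + three 0 3 4 X Y Z + three 1 2 4 X Y Z - three 1 3 5 X Y Z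

/-- Nijenhuis tensor N(X,Y) = [JX,JY] − [X,Y] − J[JX,Y] − J[X,JY] for a bracket `br`. -/
def Nij (br : (Fin 6 → ℝ) → (Fin 6 → ℝ) → (Fin 6 → ℝ)) (X Y : Fin 6 → ℝ) : Fin 6 → ℝ :=
  br (Jc X) (Jc Y) - br X Y - Jc (br (Jc X) Y) - Jc (br X (Jc Y))

/-- Chevalley–Eilenberg differential of a 2-form. -/
def d2 (br : (Fin 6 → ℝ) → (Fin 6 → ℝ) → (Fin 6 → ℝ))
    (α : (Fin 6 → ℝ) → (Fin 6 → ℝ) → ℝ) (X Y Z : Fin 6 → ℝ) : ℝ :=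
  -α (br X Y) Z + α (br X Z) Y - α (br Y Z) X

/-- Chevalley–Eilenberg differential of a 3-form. -/
def d3 (br : (Fin 6 → ℝ) → (Fin 6 → ℝ) → (Fin 6 → ℝ))
    (α : (Fin 6 → ℝ) → (Fin 6 → ℝ) → (Fin 6 → ℝ) → ℝ) (X Y Z W : Fin 6 → ℝ) : ℝ :=
  -α (br X Y) Z W + α (br X Z) Y W - α (br X W) Y Z
    - α (br Y Z) X W + α (br Y W) X Z - α (br Z W) X Y

/-- The torsion connection ∇ associated with a bracket `br` and a 3-form `T`:
g(∇_X Y, Z) = ½( g([X,Y],Z) − g([Y,Z],X) + g([Z,X],Y) + T(X,Y,Z) ). -/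
def nab (br : (Fin 6 → ℝ) → (Fin 6 → ℝ) → (Fin 6 → ℝ))
    (T : (Fin 6 → ℝ) → (Fin 6 → ℝ) → (Fin 6 → ℝ) → ℝ)
    (X Y : Fin 6 → ℝ) : Fin 6 → ℝ :=
  fun m => (1/2) * (gIP (br X Y) (e m) - gIP (br Y (e m)) X + gIP (br (e m) X) Y + T X Y (e m))

/-- The covariant derivative of a 3-form α:
(∇_X α)(Y,Z,V) = −α(∇_X Y,Z,V) − α(Y,∇_X Z,V) − α(Y,Z,∇_X V). -/
def nabForm3 (br : (Fin 6 → ℝ) → (Fin 6 → ℝ) → (Fin 6 → ℝ))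
    (T α : (Fin 6 → ℝ) → (Fin 6 → ℝ) → (Fin 6 → ℝ) → ℝ)
    (X Y Z V : Fin 6 → ℝ) : ℝ :=
  -α (nab br T X Y) Z V - α Y (nab br T X Z) V - α Y Z (nab br T X V)

/-- Curvature R(X,Y)Z = ∇_X∇_Y Z − ∇_Y∇_X Z − ∇_{[X,Y]}Z. -/
def Rmap (br : (Fin 6 → ℝ) → (Fin 6 → ℝ) → (Fin 6 → ℝ))
    (T : (Fin 6 → ℝ) → (Fin 6 → ℝ) → (Fin 6 → ℝ) → ℝ)
    (X Y Z : Fin 6 → ℝ) : Fin 6 → ℝ :=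
  nab br T X (nab br T Y Z) - nab br T Y (nab br T X Z) - nab br T (br X Y) Z

/-- R(X,Y,Z,V) = g(R(X,Y)Z,V). -/
def R4 (br : (Fin 6 → ℝ) → (Fin 6 → ℝ) → (Fin 6 → ℝ))
    (T : (Fin 6 → ℝ) → (Fin 6 → ℝ) → (Fin 6 → ℝ) → ℝ)
    (X Y Z V : Fin 6 → ℝ) : ℝ :=
  gIP (Rmap br T X Y Z) V

/-- The Lie bracket of the nilpotent Lie algebra 𝔫: [e₃,e₆]=−e₁, [e₂,e₆]=−e₄, [e₂,e₃]=−e₅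
(bilinear extension). -/
def brNil (X Y : Fin 6 → ℝ) : Fin 6 → ℝ :=
  (-two 2 5 X Y) • e 0 + (-two 1 5 X Y) • e 3 + (-two 1 2 X Y) • e 4

/-- The torsion 3-form T = −2e₁₄₅ + e₁₃₆ + e₂₃₅ − e₂₄₆ on 𝔫. -/
def TNil (X Y Z : Fin 6 → ℝ) : ℝ :=
  -2 * three 0 3 4 X Y Z + three 0 2 5 X Y Z + three 1 2 4 X Y Z - three 1 3 5 X Y Z

/-! By the defining formula, `∇_X Y = A(X) Y` for an explicit skew-symmetric matrix `A(X)`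
depending only on `X₁, X₄, X₅`. Each `A(X)` commutes with `J` and its complex trace
(the entries at `(1,2)`, `(3,4)`, `(5,6)`) vanishes, so `A(X) ∈ 𝔰𝔲(3)`: this gives
`∇J = 0` and `∇Ψ± = 0`. That the torsion is `T` holds for any antisymmetric bracket and
any 3-form. The Lee form and `dT` are direct evaluations. -/

lemma gIP_e_right (v : Fin 6 → ℝ) (m : Fin 6) : gIP v (e m) = v m := by
  simp [gIP, e]

lemma sum_smul_e (Z : Fin 6 → ℝ) : ∑ m, Z m • e m = Z := by
  funext j
  simp [e]

theorem gIP_nab_sub_nab_sub_bracket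
    (br : (Fin 6 → ℝ) → (Fin 6 → ℝ) → (Fin 6 → ℝ))
    (T : (Fin 6 → ℝ) → (Fin 6 → ℝ) → (Fin 6 → ℝ) → ℝ)
    (hbr : ∀ X Y, br X Y = -br Y X) (hT : ∀ X Y Z, T X Y Z = -T Y X Z)
    (hTlin : ∀ X Y, IsLinearMap ℝ (T X Y)) (X Y Z : Fin 6 → ℝ) :
    gIP (nab br T X Y - nab br T Y X - br X Y) Z = T X Y Z := by
  have hcoord : ∀ m, (nab br T X Y - nab br T Y X - br X Y) m = T X Y (e m) := by
    intro m
    simp only [Pi.sub_apply, nab, gIP_e_right]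
    rw [hbr Y X, hbr X (e m), hbr (e m) Y, hT Y X]
    simp only [gIP, Pi.neg_apply, neg_mul, Finset.sum_neg_distrib]
    ring
  let L := IsLinearMap.mk' (T X Y) (hTlin X Y)
  calc gIP (nab br T X Y - nab br T Y X - br X Y) Z
      = ∑ m, Z m • L (e m) := by
        simp only [gIP, hcoord, smul_eq_mul, mul_comm, L, IsLinearMap.mk'_apply]
    _ = L (∑ m, Z m • e m) := by rw [map_sum]; simp only [map_smul]
    _ = T X Y Z := by rw [sum_smul_e]; rfl

lemma brNil_apply (X Y : Fin 6 → ℝ) :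
    brNil X Y =
      ![X 5 * Y 2 - X 2 * Y 5, 0, 0, X 5 * Y 1 - X 1 * Y 5, X 2 * Y 1 - X 1 * Y 2, 0] := by
  funext m
  fin_cases m <;> simp [brNil, two, e]

lemma brNil_antisymm (X Y : Fin 6 → ℝ) : brNil X Y = -brNil Y X := by
  funext m
  simp only [brNil, two, Pi.neg_apply, Pi.add_apply, Pi.smul_apply, smul_eq_mul]
  ring

lemma TNil_antisymm (X Y Z : Fin 6 → ℝ) : TNil X Y Z = -TNil Y X Z := by
  simp only [TNil, three]
  ring

lemma isLinearMap_TNil (X Y : Fin 6 → ℝ) : IsLinearMap ℝ (TNil X Y) where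
  map_add Z W := by simp only [TNil, three, Pi.add_apply]; ring
  map_smul c Z := by simp only [TNil, three, Pi.smul_apply, smul_eq_mul]; ring

lemma nab_brNil_TNil (X Y : Fin 6 → ℝ) :
    nab brNil TNil X Y = ![X 4 * Y 3 - X 3 * Y 4, -X 3 * Y 5 - X 4 * Y 2, X 4 * Y 1 - X 0 * Y 5,
      X 0 * Y 4 - X 4 * Y 0, X 3 * Y 0 - X 0 * Y 3, X 0 * Y 2 + X 3 * Y 1] := by
  funext m
  fin_cases m <;>
    · simp only [nab, brNil_apply, gIP, Fin.sum_univ_six, TNil, three, e, Fin.isValue,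
        Fin.reduceFinMk, Fin.reduceEq, Fin.zero_eta, Fin.mk_one, ↓reduceIte, Matrix.cons_val_zero,
        Matrix.cons_val_one, Matrix.cons_val]
      ring

lemma nab_brNil_TNil_Jc (X Y : Fin 6 → ℝ) :
    nab brNil TNil X (Jc Y) = Jc (nab brNil TNil X Y) := by
  simp only [nab_brNil_TNil, Jc]
  funext m
  fin_cases m <;>
    · simp only [Fin.isValue, Fin.reduceFinMk, Fin.zero_eta, Fin.mk_one, Matrix.cons_val_zero,
        Matrix.cons_val_one, Matrix.cons_val]
      ring

lemma nabForm3_brNil_TNil_Psip (X Y Z V : Fin 6 → ℝ) :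
    nabForm3 brNil TNil Psip X Y Z V = 0 := by
  simp only [nabForm3, Psip, three, nab_brNil_TNil,
    Matrix.cons_val_zero, Matrix.cons_val_one, Matrix.cons_val]
  ring

lemma nabForm3_brNil_TNil_Psim (X Y Z V : Fin 6 → ℝ) :
    nabForm3 brNil TNil Psim X Y Z V = 0 := by
  simp only [nabForm3, Psim, three, nab_brNil_TNil,
    Matrix.cons_val_zero, Matrix.cons_val_one, Matrix.cons_val]
  ring

lemma sum_TNil_Jc_e_Jc_e (X : Fin 6 → ℝ) : ∑ i, TNil (Jc X) (e i) (Jc (e i)) = 0 := by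
  simp [Fin.sum_univ_six, TNil, three, Jc, e]

lemma d3_brNil_TNil (X Y Z W : Fin 6 → ℝ) :
    d3 brNil TNil X Y Z W
      = -2 * (four 0 1 2 3 X Y Z W + four 0 1 4 5 X Y Z W + four 2 3 4 5 X Y Z W) := by
  simp only [d3, TNil, three, four, brNil_apply,
    Matrix.cons_val_zero, Matrix.cons_val_one, Matrix.cons_val]
  ring

/-- on 𝔫, the torsion connection ∇ of T = −2e₁₄₅ + e₁₃₆ + e₂₃₅ − e₂₄₆ satisfies
∇J = 0, ∇Ψ⁺ = ∇Ψ⁻ = 0, has torsion T, the Lee form vanishes, and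
dT = −2(e₁₂₃₄ + e₁₂₅₆ + e₃₄₅₆). -/
theorem stmt16 :
    (∀ X Y : Fin 6 → ℝ, nab brNil TNil X (Jc Y) = Jc (nab brNil TNil X Y)) ∧
    (∀ X Y Z V : Fin 6 → ℝ, nabForm3 brNil TNil Psip X Y Z V = 0) ∧
    (∀ X Y Z V : Fin 6 → ℝ, nabForm3 brNil TNil Psim X Y Z V = 0) ∧
    (∀ X Y Z : Fin 6 → ℝ,
      gIP (nab brNil TNil X Y - nab brNil TNil Y X - brNil X Y) Z = TNil X Y Z) ∧
    (∀ X : Fin 6 → ℝ, -(1/2) * ∑ i, TNil (Jc X) (e i) (Jc (e i)) = 0) ∧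
    (∀ X Y Z W : Fin 6 → ℝ, d3 brNil TNil X Y Z W
      = -2 * (four 0 1 2 3 X Y Z W + four 0 1 4 5 X Y Z W + four 2 3 4 5 X Y Z W)) := by
  refine ⟨nab_brNil_TNil_Jc, nabForm3_brNil_TNil_Psip, nabForm3_brNil_TNil_Psim,
    gIP_nab_sub_nab_sub_bracket brNil TNil brNil_antisymm TNil_antisymm isLinearMap_TNil,
    fun X => ?_, d3_brNil_TNil⟩
  rw [sum_TNil_Jc_e_Jc_e, mul_zero]
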